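/- Let R be a commutative ring, n ≥ 2, G an abelian group, and φ : Um_n(R) → G a map satisfying MS1 (φ(vε) = φ(v) for every ε ∈ E_n(R) and v ∈ Um_n(R)) and MS4 (φ(f², a₂,…,aₙ)·φ(g, a₂,…,aₙ) = φ(f²g, a₂,…,aₙ) whenever all rows involved are unimodular). Then φ satisfies MS3 (φ(x, a₂,…,aₙ)·φ(y, a₂,…,aₙ) = φ(xy, a₂,…,aₙ) whenever x + y = 1 and all rows involved are unimodular) if and only if φ satisfies MS5 (φ(r, a₂,…,aₙ)·φ(1+q, a₂,…,aₙ) = φ(q, a₂,…,aₙ) whenever r(1+q) ≡ q mod (a₂,…,aₙ) and all rows involved are unimodular). -/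

import Mathlib

/-- A row `v` of length `n` over a commutative ring is *unimodular* if there is a row `w`
with `∑ i, v i * w i = 1`. -/
def IsUnimodular {R : Type*} [CommRing R] {n : ℕ} (v : Fin n → R) : Prop :=
  ∃ w : Fin n → R, ∑ i, v i * w i = 1

/-- `ε` lies in the elementary group `E_n(R)`, i.e. the (sub)group of `GL_n(R)` generated by
the elementary matrices `e_{ij}(λ) = I + λ E_{ij}` (`i ≠ j`).  Since the generating set is
closed under inverses, this coincides with the multiplicative closure. -/
def IsElementary {R : Type*} [CommRing R] {n : ℕ} (ε : Matrix (Fin n) (Fin n) R) : Prop :=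
  ε ∈ Submonoid.closure {M : Matrix (Fin n) (Fin n) R |
    ∃ (i j : Fin n) (c : R), i ≠ j ∧ M = Matrix.transvection i j c}

/-- An `m × n` matrix is right invertible (i.e. lies in `Um_{m,n}(R)`) if it has a right
inverse. -/
def RightInvertible {R : Type*} [CommRing R] {m n : ℕ} (A : Matrix (Fin m) (Fin n) R) : Prop :=
  ∃ B : Matrix (Fin n) (Fin m) R, A * B = 1

/-- The stable range condition `sr_k(R)`. -/
def SRCond (R : Type*) [CommRing R] (k : ℕ) : Prop :=
  ∀ a : Fin (k + 1) → R, IsUnimodular a →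
    ∃ c : Fin k → R, IsUnimodular (fun i : Fin k => a i.castSucc + c i * a (Fin.last k))

section MennickeSymbolRelations

variable {R : Type*} [CommRing R] {G : Type*} [CommGroup G] {k : ℕ}

/-- `MS1`: invariance of `φ` under the right action of `E_n(R)` on unimodular rows. -/
def MS1 (φ : (Fin (k + 1) → R) → G) : Prop :=
  ∀ (v : Fin (k + 1) → R) (ε : Matrix (Fin (k + 1)) (Fin (k + 1)) R),
    IsUnimodular v → IsElementary ε → φ (Matrix.vecMul v ε) = φ v

/-- `MS3`: `φ(x,a)·φ(y,a) = φ(xy,a)` whenever `x + y = 1` and all rows involved are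
unimodular. -/
def MS3 (φ : (Fin (k + 1) → R) → G) : Prop :=
  ∀ (x y : R) (a : Fin k → R), x + y = 1 →
    IsUnimodular (Fin.cons x a) → IsUnimodular (Fin.cons y a) →
    IsUnimodular (Fin.cons (x * y) a) →
    φ (Fin.cons x a) * φ (Fin.cons y a) = φ (Fin.cons (x * y) a)

/-- `MS4`: `φ(f²,a)·φ(g,a) = φ(f²g,a)` whenever all rows involved are unimodular. -/
def MS4 (φ : (Fin (k + 1) → R) → G) : Prop :=
  ∀ (f g : R) (a : Fin k → R),
    IsUnimodular (Fin.cons (f ^ 2) a) → IsUnimodular (Fin.cons g a) →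
    IsUnimodular (Fin.cons (f ^ 2 * g) a) →
    φ (Fin.cons (f ^ 2) a) * φ (Fin.cons g a) = φ (Fin.cons (f ^ 2 * g) a)

/-- `MS5`: `φ(r,a)·φ(1+q,a) = φ(q,a)` whenever `r(1+q) ≡ q mod (a₂,…,aₙ)` and all rows
involved are unimodular. -/
def MS5 (φ : (Fin (k + 1) → R) → G) : Prop :=
  ∀ (r q : R) (a : Fin k → R),
    r * (1 + q) - q ∈ Ideal.span (Set.range a) →
    IsUnimodular (Fin.cons r a) → IsUnimodular (Fin.cons (1 + q) a) →
    IsUnimodular (Fin.cons q a) →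
    φ (Fin.cons r a) * φ (Fin.cons (1 + q) a) = φ (Fin.cons q a)

end MennickeSymbolRelations

/-!
By `MS1`, `φ (x, a)` depends only on the class of `x` in `S = R ⧸ (a)`, which is a unit of `S`;
so for fixed `a` the map `φ` becomes a function `ψ` on `Sˣ`, and `MS4` says
`ψ (s² g) = ψ (s²) ψ g`. Then `ψ (s²) ψ (s⁻¹) = ψ s` and `ψ (s²) ψ (x s⁻¹) = ψ (x s)`, so
`ψ x ψ y = ψ (x y)` holds iff `ψ x ψ y⁻¹ = ψ (x y⁻¹)` does. For `x + y = 1` the first is `MS3`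
for the pair `(x, y)`, and the second is `MS5` for `r = x`, `1 + q = y⁻¹`.
-/

section

variable {R : Type*} [CommRing R] {G : Type*} {k : ℕ}

theorem isUnimodular_iff_one_mem_span {n : ℕ} {v : Fin n → R} :
    IsUnimodular v ↔ (1 : R) ∈ Ideal.span (Set.range v) := by
  simp only [IsUnimodular, Ideal.mem_span_range_iff_exists_fun, mul_comm]

theorem isUnimodular_cons_iff {x : R} {a : Fin k → R} :
    IsUnimodular (Fin.cons x a) ↔ IsUnit (Ideal.Quotient.mk (Ideal.span (Set.range a)) x) := by
  rw [isUnimodular_iff_one_mem_span, Fin.range_cons, Ideal.span_insert,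
    Ideal.mem_span_singleton_sup, isUnit_iff_exists_inv]
  constructor
  · rintro ⟨t, b, hb, hbt⟩
    refine ⟨Ideal.Quotient.mk _ t, ?_⟩
    rw [← map_mul, ← map_one (Ideal.Quotient.mk _), Ideal.Quotient.eq]
    convert neg_mem hb using 1
    linear_combination hbt
  · rintro ⟨s, hs⟩
    obtain ⟨t, rfl⟩ := Ideal.Quotient.mk_surjective s
    rw [← map_mul, ← map_one (Ideal.Quotient.mk _), Ideal.Quotient.eq] at hs
    exact ⟨t, 1 - x * t, by simpa using neg_mem hs, by ring⟩

theorem isUnimodular_cons_of_mk_eq {x : R} {a : Fin k → R}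
    {u : (R ⧸ Ideal.span (Set.range a))ˣ} (hu : Ideal.Quotient.mk _ x = u.val) :
    IsUnimodular (Fin.cons x a) :=
  isUnimodular_cons_iff.mpr (hu ▸ u.isUnit)

theorem vecMul_cons_transvection_succ_zero (x : R) (a : Fin k → R) (i : Fin k) (c : R) :
    Matrix.vecMul (Fin.cons x a) (Matrix.transvection i.succ 0 c) =
      Fin.cons (x + a i * c) a := by
  ext j
  refine Fin.cases ?_ (fun j ↦ ?_) j <;>
    simp [Matrix.transvection, Matrix.vecMul, dotProduct, Matrix.single_apply,
      Matrix.one_apply, Fin.sum_univ_succ, (Fin.succ_ne_zero _).symm]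

theorem exists_isElementary_vecMul_cons (c : Fin k → R) :
    ∃ ε : Matrix (Fin (k + 1)) (Fin (k + 1)) R, IsElementary ε ∧
      ∀ (x : R) (a : Fin k → R),
        Matrix.vecMul (Fin.cons x a) ε = Fin.cons (x + ∑ i, a i * c i) a := by
  suffices ∀ s : Finset (Fin k), ∃ ε : Matrix (Fin (k + 1)) (Fin (k + 1)) R,
      IsElementary ε ∧ ∀ (x : R) (a : Fin k → R),
        Matrix.vecMul (Fin.cons x a) ε = Fin.cons (x + ∑ i ∈ s, a i * c i) a from this _
  intro s
  induction s using Finset.induction_on with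
  | empty => exact ⟨1, Submonoid.one_mem _, fun x a ↦ by simp⟩
  | @insert i s hi ih =>
    obtain ⟨ε, hε, hmul⟩ := ih
    refine ⟨Matrix.transvection i.succ 0 (c i) * ε,
      Submonoid.mul_mem _ (Submonoid.subset_closure ⟨_, _, _, Fin.succ_ne_zero i, rfl⟩) hε,
      fun x a ↦ ?_⟩
    rw [← Matrix.vecMul_vecMul, vecMul_cons_transvection_succ_zero, hmul, Finset.sum_insert hi,
      add_assoc]

theorem MS1.apply_cons_eq_of_sub_mem {φ : (Fin (k + 1) → R) → G} (h1 : MS1 φ) {x x' : R}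
    {a : Fin k → R} (hx : IsUnimodular (Fin.cons x a))
    (h : x' - x ∈ Ideal.span (Set.range a)) : φ (Fin.cons x' a) = φ (Fin.cons x a) := by
  obtain ⟨c, hc⟩ := Ideal.mem_span_range_iff_exists_fun.mp h
  obtain ⟨ε, hε, hmul⟩ := exists_isElementary_vecMul_cons c
  have hx' : x + ∑ i, a i * c i = x' := by simp only [mul_comm (a _), hc, add_sub_cancel]
  rw [← h1 _ ε hx hε, hmul, hx']

/-- `φ (·, a)` on the units of `R ⧸ (a)`, evaluated at an arbitrary representative; under `MS1`
the choice does not matter (`MS1.unitSymbol_eq`). -/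
noncomputable def unitSymbol (φ : (Fin (k + 1) → R) → G) (a : Fin k → R)
    (u : (R ⧸ Ideal.span (Set.range a))ˣ) : G :=
  φ (Fin.cons (Function.surjInv Ideal.Quotient.mk_surjective u.val) a)

theorem MS1.unitSymbol_eq {φ : (Fin (k + 1) → R) → G} (h1 : MS1 φ) {x : R} {a : Fin k → R}
    {u : (R ⧸ Ideal.span (Set.range a))ˣ} (hu : Ideal.Quotient.mk _ x = u.val) :
    unitSymbol φ a u = φ (Fin.cons x a) := by
  refine h1.apply_cons_eq_of_sub_mem (isUnimodular_cons_of_mk_eq hu) ?_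
  rw [← Ideal.Quotient.eq, Function.surjInv_eq Ideal.Quotient.mk_surjective, hu]

theorem MS1.ms3_iff [CommGroup G] {φ : (Fin (k + 1) → R) → G} (h1 : MS1 φ) :
    MS3 φ ↔ ∀ (a : Fin k → R) (x y : (R ⧸ Ideal.span (Set.range a))ˣ), x.val + y.val = 1 →
      unitSymbol φ a x * unitSymbol φ a y = unitSymbol φ a (x * y) := by
  constructor
  · intro h3 a x y hxy
    obtain ⟨x', hx'⟩ := Ideal.Quotient.mk_surjective x.val
    have hy' : Ideal.Quotient.mk _ (1 - x') = y.val := by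
      rw [map_sub, map_one, hx', ← hxy, add_sub_cancel_left]
    have hxy' : Ideal.Quotient.mk _ (x' * (1 - x')) = (x * y).val := by
      rw [map_mul, hx', hy', Units.val_mul]
    rw [h1.unitSymbol_eq hx', h1.unitSymbol_eq hy', h1.unitSymbol_eq hxy']
    exact h3 _ _ _ (add_sub_cancel _ _) (isUnimodular_cons_of_mk_eq hx')
      (isUnimodular_cons_of_mk_eq hy') (isUnimodular_cons_of_mk_eq hxy')
  · intro h x y a hxy hx hy _
    obtain ⟨ux, hux⟩ := isUnimodular_cons_iff.mp hx
    obtain ⟨uy, huy⟩ := isUnimodular_cons_iff.mp hy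
    have := h a ux uy (by rw [hux, huy, ← map_add, hxy, map_one])
    rwa [h1.unitSymbol_eq hux.symm, h1.unitSymbol_eq huy.symm,
      h1.unitSymbol_eq (by rw [Units.val_mul, hux, huy, map_mul])] at this

theorem MS1.ms5_iff [CommGroup G] {φ : (Fin (k + 1) → R) → G} (h1 : MS1 φ) :
    MS5 φ ↔ ∀ (a : Fin k → R) (r u : (R ⧸ Ideal.span (Set.range a))ˣ), r.val + ↑u⁻¹ = 1 →
      unitSymbol φ a r * unitSymbol φ a u = unitSymbol φ a (r * u) := by
  constructor
  · intro h5 a r u hru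
    obtain ⟨r', hr'⟩ := Ideal.Quotient.mk_surjective r.val
    obtain ⟨q, hq⟩ := Ideal.Quotient.mk_surjective (r * u).val
    have hu : Ideal.Quotient.mk _ (1 + q) = u.val := by
      rw [map_add, map_one, hq, Units.val_mul]
      linear_combination u.val * hru - u.mul_inv
    rw [h1.unitSymbol_eq hr', h1.unitSymbol_eq hu, h1.unitSymbol_eq hq]
    refine h5 _ _ _ ?_ (isUnimodular_cons_of_mk_eq hr') (isUnimodular_cons_of_mk_eq hu)
      (isUnimodular_cons_of_mk_eq hq)
    rw [← Ideal.Quotient.eq_zero_iff_mem, map_sub, map_mul, hr', hu, hq, Units.val_mul, sub_self]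
  · intro h r q a hI hr hu _
    set I := Ideal.span (Set.range a)
    obtain ⟨ur, hur⟩ := isUnimodular_cons_iff.mp hr
    obtain ⟨u, hu⟩ := isUnimodular_cons_iff.mp hu
    have hrq : Ideal.Quotient.mk I r * Ideal.Quotient.mk I (1 + q) = Ideal.Quotient.mk I q := by
      rw [← sub_eq_zero, ← map_mul, ← map_sub, Ideal.Quotient.eq_zero_iff_mem]
      exact hI
    have hru : ur.val + ↑u⁻¹ = 1 := by
      have hinv := u.mul_inv
      rw [hu, map_add, map_one] at hinv
      rw [map_add, map_one] at hrq
      rw [hur]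
      linear_combination u⁻¹.val * hrq + (1 - Ideal.Quotient.mk I r) * hinv
    have := h a ur u hru
    rwa [h1.unitSymbol_eq hur.symm, h1.unitSymbol_eq hu.symm,
      h1.unitSymbol_eq (by rw [Units.val_mul, hur, hu, hrq])] at this

theorem MS4.unitSymbol_sq_mul [CommGroup G] {φ : (Fin (k + 1) → R) → G} (h4 : MS4 φ)
    (h1 : MS1 φ) (a : Fin k → R) (s g : (R ⧸ Ideal.span (Set.range a))ˣ) :
    unitSymbol φ a (s ^ 2) * unitSymbol φ a g = unitSymbol φ a (s ^ 2 * g) := by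
  obtain ⟨f, hf⟩ := Ideal.Quotient.mk_surjective s.val
  obtain ⟨g', hg⟩ := Ideal.Quotient.mk_surjective g.val
  have hf2 : Ideal.Quotient.mk _ (f ^ 2) = (s ^ 2).val := by
    rw [map_pow, hf, Units.val_pow_eq_pow_val]
  have hf2g : Ideal.Quotient.mk _ (f ^ 2 * g') = (s ^ 2 * g).val := by
    rw [map_mul, hf2, hg, Units.val_mul]
  rw [h1.unitSymbol_eq hf2, h1.unitSymbol_eq hg, h1.unitSymbol_eq hf2g]
  exact h4 f g' a (isUnimodular_cons_of_mk_eq hf2) (isUnimodular_cons_of_mk_eq hg)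
    (isUnimodular_cons_of_mk_eq hf2g)

theorem mul_eq_iff_mul_inv_eq_of_sq_mul {S : Type*} [CommMonoid S] [CommGroup G] {ψ : Sˣ → G}
    (hsq : ∀ s g : Sˣ, ψ (s ^ 2) * ψ g = ψ (s ^ 2 * g)) (x y : Sˣ) :
    ψ x * ψ y = ψ (x * y) ↔ ψ x * ψ y⁻¹ = ψ (x * y⁻¹) := by
  have hy : ψ (y ^ 2) * ψ y⁻¹ = ψ y := by rw [hsq]; group
  have hxy : ψ (y ^ 2) * ψ (x * y⁻¹) = ψ (x * y) := by
    rw [hsq]; simp only [sq, mul_left_comm, mul_assoc, mul_inv_cancel, mul_one]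
  rw [← hy, ← hxy, mul_left_comm, mul_right_inj]

theorem forall_add_eq_one_mul_iff_of_sq_mul {S : Type*} [CommRing S] [CommGroup G]
    {ψ : Sˣ → G} (hsq : ∀ s g : Sˣ, ψ (s ^ 2) * ψ g = ψ (s ^ 2 * g)) :
    (∀ x y : Sˣ, x.val + y.val = 1 → ψ x * ψ y = ψ (x * y)) ↔
      ∀ r u : Sˣ, r.val + ↑u⁻¹ = 1 → ψ r * ψ u = ψ (r * u) := by
  constructor
  · intro h r u hru
    simpa using (mul_eq_iff_mul_inv_eq_of_sq_mul hsq r u⁻¹).mp (h r u⁻¹ hru)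
  · intro h x y hxy
    exact (mul_eq_iff_mul_inv_eq_of_sq_mul hsq x y).mpr (h x y⁻¹ (by rwa [inv_inv]))

end

theorem ms3_iff_ms5_general {R : Type*} [CommRing R] {G : Type*} [CommGroup G]
    (k : ℕ) (φ : (Fin (k + 1) → R) → G)
    (h1 : MS1 φ) (h4 : MS4 φ) : MS3 φ ↔ MS5 φ := by
  rw [h1.ms3_iff, h1.ms5_iff]
  exact forall_congr' fun a ↦ forall_add_eq_one_mul_iff_of_sq_mul (h4.unitSymbol_sq_mul h1 a)

/-- Under `MS1` and `MS4`, relations `MS3` and `MS5` are equivalent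
(van der Kallen, Lemma 3.1). -/
theorem ms3_iff_ms5 {R : Type*} [CommRing R] {G : Type*} [CommGroup G]
    (k : ℕ) (hk : 1 ≤ k) (φ : (Fin (k + 1) → R) → G)
    (h1 : MS1 φ) (h4 : MS4 φ) : MS3 φ ↔ MS5 φ :=
  ms3_iff_ms5_general k φ h1 h4
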